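/- Let $\lambda_1, \lambda_2, \lambda_3 \in C^{0,\alpha}([L_b, L_2])$ with $\lambda_1, \lambda_2, \lambda_3 > 0$, let $\mu \ge 0$ and $b_5 > 0$. Suppose $X \in C^1([L_b, L_2]) \cap C^2((L_b, L_2))$ solves $\lambda_1 X'' + \lambda_1' X' - \lambda_2 \mu X - b_5 \lambda_3 X(L_b) = 0$ on $(L_b, L_2)$ with boundary conditions $X'(L_b) = b_5 X(L_b)$ and $X'(L_2) = 0$. Then $X \equiv 0$ on $[L_b, L_2]$. -/

import Mathlib

open Set

/-- Auxiliary lemma: under the hypotheses, `X Lb ≤ 0`. Applied to `X` and `-X`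
this gives `X Lb = 0`. -/
lemma stmt_7_aux (Lb L2 μ b5 : ℝ) (hL : Lb < L2) (hμ : 0 ≤ μ) (hb5 : 0 < b5)
    (lam1 lam2 lam3 lam1' X X' X'' : ℝ → ℝ)
    (hlam1_pos : ∀ z ∈ Icc Lb L2, 0 < lam1 z)
    (hlam2_pos : ∀ z ∈ Icc Lb L2, 0 < lam2 z)
    (hlam3_pos : ∀ z ∈ Icc Lb L2, 0 < lam3 z)
    (hlam1_cont : ContinuousOn lam1 (Icc Lb L2))
    (hX : ContinuousOn X (Icc Lb L2))
    (hX' : ∀ z ∈ Icc Lb L2, HasDerivAt X (X' z) z)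
    (hX'_cont : ContinuousOn X' (Icc Lb L2))
    (hlam1' : ∀ z ∈ Ioo Lb L2, HasDerivAt lam1 (lam1' z) z)
    (hX'' : ∀ z ∈ Ioo Lb L2, HasDerivAt X' (X'' z) z)
    (heq : ∀ z ∈ Ioo Lb L2,
      lam1 z * X'' z + lam1' z * X' z - lam2 z * μ * X z - b5 * lam3 z * X Lb = 0)
    (hbc1 : X' Lb = b5 * X Lb) (hbc2 : X' L2 = 0) :
    X Lb ≤ 0 := by
  by_contra hcc
  have hc : 0 < X Lb := lt_of_not_ge fun h => hcc h
  have hLbm : Lb ∈ Icc Lb L2 := ⟨le_refl _, hL.le⟩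
  have hL2m : L2 ∈ Icc Lb L2 := ⟨hL.le, le_refl _⟩
  set W : ℝ → ℝ := fun z => lam1 z * X' z with hWdef
  have hW_cont : ContinuousOn W (Icc Lb L2) := hlam1_cont.mul hX'_cont
  have hW_deriv : ∀ z ∈ Ioo Lb L2,
      HasDerivAt W (lam2 z * μ * X z + b5 * lam3 z * X Lb) z := by
    intro z hz
    have h1 := (hlam1' z hz).mul (hX'' z hz)
    have h2 : lam1' z * X' z + lam1 z * X'' z
        = lam2 z * μ * X z + b5 * lam3 z * X Lb := by
      have := heq z hz; linarith
    rw [← h2]; exact h1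
  have hWLb : 0 < W Lb := by
    have := hlam1_pos Lb hLbm
    simp only [hWdef, hbc1]
    positivity
  have hWL2 : W L2 = 0 := by simp [hWdef, hbc2]
  -- key: if X > 0 on Ico Lb z0 with z0 ∈ Icc, then W is strictly monotone on Icc Lb z0
  have key : ∀ z0 ∈ Icc Lb L2, (∀ y ∈ Ico Lb z0, 0 < X y) →
      StrictMonoOn W (Icc Lb z0) := by
    intro z0 hz0 hpos
    apply strictMonoOn_of_hasDerivWithinAt_pos (f' := fun z =>
      lam2 z * μ * X z + b5 * lam3 z * X Lb) (convex_Icc _ _)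
      (hW_cont.mono (Icc_subset_Icc_right hz0.2))
    · intro x hx
      rw [interior_Icc] at hx
      have hx2 : x ∈ Ioo Lb L2 := ⟨hx.1, lt_of_lt_of_le hx.2 hz0.2⟩
      exact (hW_deriv x hx2).hasDerivWithinAt
    · intro x hx
      rw [interior_Icc] at hx
      have hx2 : x ∈ Ioo Lb L2 := ⟨hx.1, lt_of_lt_of_le hx.2 hz0.2⟩
      have hXx : 0 < X x := hpos x ⟨hx.1.le, hx.2⟩
      have h2 := hlam2_pos x (Ioo_subset_Icc_self hx2)
      have h3 := hlam3_pos x (Ioo_subset_Icc_self hx2)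
      have hA : 0 ≤ lam2 x * μ * X x := by positivity
      have hB : 0 < b5 * lam3 x * X Lb := by positivity
      linarith
  -- show X > 0 on all of Icc Lb L2
  have hXpos : ∀ z ∈ Icc Lb L2, 0 < X z := by
    by_contra hne
    push_neg at hne
    obtain ⟨w, hw, hwle⟩ := hne
    set S : Set ℝ := {z ∈ Icc Lb L2 | X z ≤ 0} with hSdef
    have hSne : S.Nonempty := ⟨w, hw, hwle⟩
    have hSclosed : IsClosed S :=
      hX.preimage_isClosed_of_isClosed isClosed_Icc isClosed_Iic
    have hSbdd : BddBelow S := ⟨Lb, fun x hx => hx.1.1⟩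
    set z0 := sInf S with hz0def
    have hz0S : z0 ∈ S := hSclosed.csInf_mem hSne hSbdd
    have hz0Icc : z0 ∈ Icc Lb L2 := hz0S.1
    have hz0X : X z0 ≤ 0 := hz0S.2
    have hz0gt : Lb < z0 := by
      rcases lt_or_eq_of_le hz0Icc.1 with h | h
      · exact h
      · exfalso; rw [← h] at hz0X; linarith
    have hpos : ∀ y ∈ Ico Lb z0, 0 < X y := by
      intro y hy
      by_contra hyn
      have hyS : y ∈ S := ⟨⟨hy.1, le_trans hy.2.le hz0Icc.2⟩, le_of_not_gt hyn⟩
      exact absurd (csInf_le hSbdd hyS) (not_le.mpr hy.2)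
    have hWmono := key z0 hz0Icc hpos
    -- X' > 0 on Ioo Lb z0
    have hX'pos : ∀ x ∈ Ioo Lb z0, 0 < X' x := by
      intro x hx
      have hxIcc : x ∈ Icc Lb z0 := Ioo_subset_Icc_self hx
      have hW : W Lb < W x := hWmono ⟨le_refl _, hz0gt.le⟩ hxIcc hx.1
      have hWx : 0 < W x := lt_trans hWLb hW
      have hl1 : 0 < lam1 x :=
        hlam1_pos x ⟨hx.1.le, le_trans hx.2.le hz0Icc.2⟩
      have hWxeq : W x = lam1 x * X' x := rfl
      by_contra hn
      push_neg at hn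
      have : lam1 x * X' x ≤ 0 := mul_nonpos_of_nonneg_of_nonpos hl1.le hn
      rw [hWxeq] at hWx
      linarith
    -- X strictly monotone on Icc Lb z0
    have hXmono : StrictMonoOn X (Icc Lb z0) := by
      apply strictMonoOn_of_hasDerivWithinAt_pos (f' := X') (convex_Icc _ _)
        (hX.mono (Icc_subset_Icc_right hz0Icc.2))
      · intro x hx
        rw [interior_Icc] at hx
        exact (hX' x ⟨hx.1.le, le_trans hx.2.le hz0Icc.2⟩).hasDerivWithinAt
      · intro x hx
        rw [interior_Icc] at hx
        exact hX'pos x hx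
    have : X Lb < X z0 := hXmono ⟨le_refl _, hz0gt.le⟩ ⟨hz0gt.le, le_refl _⟩ hz0gt
    linarith
  -- now W strictly monotone on whole Icc, contradiction with W L2 = 0
  have hWmono := key L2 hL2m (fun y hy => hXpos y ⟨hy.1, hy.2.le⟩)
  have : W Lb < W L2 := hWmono hLbm hL2m hL
  rw [hWL2] at this
  linarith

theorem stmt_7 (Lb L2 μ b5 : ℝ) (hL : Lb < L2) (hμ : 0 ≤ μ) (hb5 : 0 < b5)
    (lam1 lam2 lam3 lam1' X X' X'' : ℝ → ℝ)
    (hlam1_pos : ∀ z ∈ Icc Lb L2, 0 < lam1 z)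
    (hlam2_pos : ∀ z ∈ Icc Lb L2, 0 < lam2 z)
    (hlam3_pos : ∀ z ∈ Icc Lb L2, 0 < lam3 z)
    (hlam1_cont : ContinuousOn lam1 (Icc Lb L2))
    (hlam2_cont : ContinuousOn lam2 (Icc Lb L2))
    (hlam3_cont : ContinuousOn lam3 (Icc Lb L2))
    (hlam1' : ∀ z ∈ Ioo Lb L2, HasDerivAt lam1 (lam1' z) z)
    (hX : ContinuousOn X (Icc Lb L2))
    (hX' : ∀ z ∈ Icc Lb L2, HasDerivAt X (X' z) z)
    (hX'_cont : ContinuousOn X' (Icc Lb L2))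
    (hX'' : ∀ z ∈ Ioo Lb L2, HasDerivAt X' (X'' z) z)
    (heq : ∀ z ∈ Ioo Lb L2,
      lam1 z * X'' z + lam1' z * X' z - lam2 z * μ * X z - b5 * lam3 z * X Lb = 0)
    (hbc1 : X' Lb = b5 * X Lb) (hbc2 : X' L2 = 0) :
    ∀ z ∈ Icc Lb L2, X z = 0 := by
  have hLbm : Lb ∈ Icc Lb L2 := ⟨le_refl _, hL.le⟩
  -- X Lb = 0
  have h1 : X Lb ≤ 0 :=
    stmt_7_aux Lb L2 μ b5 hL hμ hb5 lam1 lam2 lam3 lam1' X X' X''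
      hlam1_pos hlam2_pos hlam3_pos hlam1_cont hX hX' hX'_cont hlam1' hX'' heq hbc1 hbc2
  have h2 : (fun z => -X z) Lb ≤ 0 := by
    apply stmt_7_aux Lb L2 μ b5 hL hμ hb5 lam1 lam2 lam3 lam1'
      (fun z => -X z) (fun z => -X' z) (fun z => -X'' z)
      hlam1_pos hlam2_pos hlam3_pos hlam1_cont hX.neg
      (fun z hz => (hX' z hz).neg) hX'_cont.neg hlam1'
      (fun z hz => (hX'' z hz).neg)
    · intro z hz
      show lam1 z * -X'' z + lam1' z * -X' z - lam2 z * μ * -X z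
        - b5 * lam3 z * -X Lb = 0
      linear_combination (-1 : ℝ) * heq z hz
    · simp [hbc1]
    · simp [hbc2]
  have hXLb : X Lb = 0 := by simp at h2; linarith
  have hX'Lb : X' Lb = 0 := by rw [hbc1, hXLb]; ring
  -- G = lam1 * X' * X
  set G : ℝ → ℝ := fun z => lam1 z * X' z * X z with hGdef
  have hG_cont : ContinuousOn G (Icc Lb L2) := (hlam1_cont.mul hX'_cont).mul hX
  have hG_deriv : ∀ z ∈ Ioo Lb L2,
      HasDerivAt G (lam2 z * μ * X z * X z + lam1 z * X' z * X' z) z := by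
    intro z hz
    have hW : HasDerivAt (fun z => lam1 z * X' z) (lam2 z * μ * X z) z := by
      have h1 := (hlam1' z hz).mul (hX'' z hz)
      have h2 : lam1' z * X' z + lam1 z * X'' z = lam2 z * μ * X z := by
        have := heq z hz; rw [hXLb] at this; linarith
      rw [← h2]; exact h1
    have := hW.mul (hX' z (Ioo_subset_Icc_self hz))
    exact this
  have hGLb : G Lb = 0 := by simp [hGdef, hX'Lb]
  have hGL2 : G L2 = 0 := by simp [hGdef, hbc2]
  have hG_mono : MonotoneOn G (Icc Lb L2) := by
    apply monotoneOn_of_hasDerivWithinAt_nonneg (f' := fun z =>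
      lam2 z * μ * X z * X z + lam1 z * X' z * X' z) (convex_Icc _ _) hG_cont
    · intro x hx
      rw [interior_Icc] at hx
      exact (hG_deriv x hx).hasDerivWithinAt
    · intro x hx
      rw [interior_Icc] at hx
      have h1 := hlam1_pos x (Ioo_subset_Icc_self hx)
      have h2 := hlam2_pos x (Ioo_subset_Icc_self hx)
      have hA := mul_nonneg (mul_nonneg h2.le hμ) (mul_self_nonneg (X x))
      have hB := mul_nonneg h1.le (mul_self_nonneg (X' x))
      have e1 : lam2 x * μ * (X x * X x) = lam2 x * μ * X x * X x := by ring
      have e2 : lam1 x * (X' x * X' x) = lam1 x * X' x * X' x := by ring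
      linarith
  have hGzero : ∀ z ∈ Icc Lb L2, G z = 0 := by
    intro z hz
    have ha : G Lb ≤ G z := hG_mono ⟨le_refl _, hL.le⟩ hz hz.1
    have hb : G z ≤ G L2 := hG_mono hz ⟨hL.le, le_refl _⟩ hz.2
    rw [hGLb] at ha; rw [hGL2] at hb; linarith
  -- derivative of G is 0 on Ioo, hence X' = 0 on Ioo
  have hX'zero : ∀ z ∈ Ioo Lb L2, X' z = 0 := by
    intro z hz
    have hEv : G =ᶠ[nhds z] (fun _ => (0 : ℝ)) := by
      filter_upwards [isOpen_Ioo.mem_nhds hz] with y hy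
      exact hGzero y (Ioo_subset_Icc_self hy)
    have hG0 : HasDerivAt G 0 z := by
      have : HasDerivAt (fun _ : ℝ => (0 : ℝ)) 0 z := hasDerivAt_const z 0
      exact this.congr_of_eventuallyEq hEv
    have huniq : lam2 z * μ * X z * X z + lam1 z * X' z * X' z = 0 :=
      (hG_deriv z hz).unique hG0
    have h1 := hlam1_pos z (Ioo_subset_Icc_self hz)
    have h2 := hlam2_pos z (Ioo_subset_Icc_self hz)
    have hA := mul_nonneg (mul_nonneg h2.le hμ) (mul_self_nonneg (X z))
    have e1 : lam2 z * μ * (X z * X z) = lam2 z * μ * X z * X z := by ring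
    have hB := mul_nonneg h1.le (mul_self_nonneg (X' z))
    have e2 : lam1 z * (X' z * X' z) = lam1 z * X' z * X' z := by ring
    have hzero : lam1 z * (X' z * X' z) = 0 := by linarith
    rcases mul_eq_zero.mp hzero with h | h
    · exact absurd h h1.ne'
    · exact mul_self_eq_zero.mp h
  -- X constant on Icc
  have hmono : MonotoneOn X (Icc Lb L2) := by
    apply monotoneOn_of_hasDerivWithinAt_nonneg (f' := X') (convex_Icc _ _) hX
    · intro x hx
      rw [interior_Icc] at hx
      exact (hX' x (Ioo_subset_Icc_self hx)).hasDerivWithinAt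
    · intro x hx
      rw [interior_Icc] at hx
      rw [hX'zero x hx]
  have hanti : AntitoneOn X (Icc Lb L2) := by
    apply antitoneOn_of_hasDerivWithinAt_nonpos (f' := X') (convex_Icc _ _) hX
    · intro x hx
      rw [interior_Icc] at hx
      exact (hX' x (Ioo_subset_Icc_self hx)).hasDerivWithinAt
    · intro x hx
      rw [interior_Icc] at hx
      rw [hX'zero x hx]
  intro z hz
  have ha : X Lb ≤ X z := hmono hLbm hz hz.1
  have hb : X z ≤ X Lb := hanti hLbm hz hz.1
  rw [hXLb] at ha hb
  linarith
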